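/- For any real matrices A ∈ ℝ^{m×r} and B ∈ ℝ^{n×r}, | ‖ABᵀ‖_* − ‖A‖_F² | ≤ √(‖AᵀA − BᵀB‖_*) · ‖A‖_*. -/

import Mathlib

open Matrix

/-- Squared Frobenius norm of a real matrix. -/
noncomputable def frobSq {m n : ℕ} (A : Matrix (Fin m) (Fin n) ℝ) : ℝ :=
  ∑ i, ∑ j, (A i j) ^ 2

/-- Frobenius norm. -/
noncomputable def frobNorm {m n : ℕ} (A : Matrix (Fin m) (Fin n) ℝ) : ℝ :=
  Real.sqrt (frobSq A)

lemma wwT_posSemidef {m n : ℕ} (W : Matrix (Fin m) (Fin n) ℝ) :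
    (W * Wᵀ).PosSemidef := by
  simpa [Matrix.conjTranspose_eq_transpose_of_trivial] using
    W.posSemidef_self_mul_conjTranspose

/-- Nuclear norm: trace of the PSD square root of `W * Wᵀ`. -/
noncomputable def nuclearNorm {m n : ℕ} (W : Matrix (Fin m) (Fin n) ℝ) : ℝ :=
  ((wwT_posSemidef W).isHermitian.eigenvectorUnitary.1 *
    diagonal ((√·) ∘ (wwT_posSemidef W).isHermitian.eigenvalues) *
    (star (wwT_posSemidef W).isHermitian.eigenvectorUnitary : Matrix (Fin m) (Fin m) ℝ)).trace

/-!
Put `P = √(AᵀA)` and `C = √(BᵀB)`. Then `ABᵀ` and `AC` have the same Gram matrix, and so have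
`AAᵀ` and `AP`; hence `‖ABᵀ‖_* = ‖AC‖_*` and `‖A‖_F² = ‖AP‖_*`. The polar decomposition
`W = √(WWᵀ) Y` with `YYᵀ ≤ 1` shows that `‖W‖_*` is the largest value of `tr (UᵀW)` over
contractions `U`. This gives the triangle inequality and the Hölder bound `‖AM‖_* ≤ ‖A‖_F ‖M‖_F`,
so the gap is at most `‖A‖_F ‖P - C‖_F`. The Powers–Størmer inequality and `‖A‖_F ≤ ‖A‖_*`
finish the proof.
-/

open scoped MatrixOrder

namespace Matrix

variable {m n : Type*} [Fintype m] [Fintype n]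

omit [Fintype n] in
lemma IsHermitian.transpose_eq {M : Matrix n n ℝ} (hM : M.IsHermitian) : Mᵀ = M :=
  (isHermitian_iff_isSymm.mp hM).eq

lemma PosSemidef.mul_mul_transpose_same {M : Matrix n n ℝ} (hM : M.PosSemidef)
    (V : Matrix m n ℝ) : (V * M * Vᵀ).PosSemidef := by
  simpa using hM.mul_mul_conjTranspose_same V

lemma posSemidef_mul_transpose_self (W : Matrix m n ℝ) : (W * Wᵀ).PosSemidef := by
  simpa using posSemidef_self_mul_conjTranspose W

lemma posSemidef_transpose_mul_self (W : Matrix m n ℝ) : (Wᵀ * W).PosSemidef := by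
  simpa using posSemidef_conjTranspose_mul_self W

lemma posSemidef_sqrt [DecidableEq n] (M : Matrix n n ℝ) : (CFC.sqrt M).PosSemidef :=
  nonneg_iff_posSemidef.mp (CFC.sqrt_nonneg M)

lemma IsHermitian.exists_orthogonal_diagonalization [DecidableEq n] {M : Matrix n n ℝ}
    (hM : M.IsHermitian) :
    ∃ V : Matrix n n ℝ, Vᵀ * V = 1 ∧ V * Vᵀ = 1 ∧ M = V * diagonal hM.eigenvalues * Vᵀ := by
  have hstar (V : Matrix n n ℝ) : star V = Vᵀ := by
    rw [star_eq_conjTranspose, conjTranspose_eq_transpose_of_trivial]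
  refine ⟨hM.eigenvectorUnitary, ?_, ?_, ?_⟩
  · rw [← hstar, Unitary.coe_star_mul_self]
  · rw [← hstar, Unitary.mul_star_self_of_mem hM.eigenvectorUnitary.2]
  · simpa [Unitary.conjStarAlgAut_apply, Function.comp_def, hstar] using hM.spectral_theorem

lemma le_one_of_transpose_eq_of_mul_self_eq [DecidableEq n] {P : Matrix n n ℝ} (hPt : Pᵀ = P)
    (hP : P * P = P) : P ≤ 1 := by
  have h : (1 - P) * (1 - P)ᵀ = 1 - P := by
    rw [transpose_sub, transpose_one, hPt, sub_mul, mul_sub, mul_sub, hP]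
    simp
  rw [le_iff, ← h]
  exact posSemidef_mul_transpose_self _

lemma mul_diagonal_eq_self_of_transpose_mul_self_eq_diagonal [DecidableEq n]
    {N : Matrix m n ℝ} {d e : n → ℝ} (hN : Nᵀ * N = diagonal d) (he : ∀ i, d i ≠ 0 → e i = 1) :
    N * diagonal e = N := by
  ext k i
  rw [mul_diagonal]
  by_cases hd : d i = 0
  · have hcol : (fun k => N k i) ⬝ᵥ (fun k => N k i) = 0 := by
      simpa [mul_apply, dotProduct, hd] using congrFun (congrFun hN i) i
    simp [congrFun (dotProduct_self_eq_zero.mp hcol) k]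
  · rw [he i hd, mul_one]

section ConjDiagonal

variable [DecidableEq n]

lemma conj_diagonal_mul_conj_diagonal {N : Matrix m n ℝ} {d : n → ℝ} (hN : Nᵀ * N = diagonal d)
    (a b : n → ℝ) :
    N * diagonal a * Nᵀ * (N * diagonal b * Nᵀ) = N * diagonal (a * d * b) * Nᵀ := by
  simp only [Matrix.mul_assoc]
  rw [← Matrix.mul_assoc Nᵀ, hN, ← Matrix.mul_assoc (diagonal d), ← Matrix.mul_assoc (diagonal a),
    diagonal_mul_diagonal, diagonal_mul_diagonal, mul_assoc a]
  rfl

lemma conj_diagonal_mul_conj_diagonal_of_orthogonal {V : Matrix n n ℝ} (hV : Vᵀ * V = 1)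
    (a b : n → ℝ) :
    V * diagonal a * Vᵀ * (V * diagonal b * Vᵀ) = V * diagonal (a * b) * Vᵀ := by
  have h1 : Vᵀ * V = diagonal 1 := by rw [hV]; exact diagonal_one.symm
  rw [conj_diagonal_mul_conj_diagonal h1, mul_one]

omit [Fintype m] in
lemma transpose_conj_diagonal (N : Matrix m n ℝ) (a : n → ℝ) :
    (N * diagonal a * Nᵀ)ᵀ = N * diagonal a * Nᵀ := by
  rw [transpose_mul, transpose_mul, diagonal_transpose, transpose_transpose, Matrix.mul_assoc]

lemma trace_conj_diagonal_mul (N : Matrix m n ℝ) (a : n → ℝ) (S : Matrix m m ℝ) :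
    (N * diagonal a * Nᵀ * S).trace = ∑ i, a i * (Nᵀ * S * N) i i := by
  rw [Matrix.mul_assoc, Matrix.trace_mul_cycle, Matrix.trace_mul_comm, Matrix.mul_assoc]
  simp [trace, diagonal_mul]

lemma trace_conj_diagonal_of_orthogonal {V : Matrix n n ℝ} (hV : Vᵀ * V = 1) (a : n → ℝ) :
    (V * diagonal a * Vᵀ).trace = ∑ i, a i := by
  rw [trace_mul_cycle, hV, Matrix.one_mul, trace_diagonal]

lemma conj_diagonal_le_one_of_orthogonal {V : Matrix n n ℝ} (hV : V * Vᵀ = 1) {a : n → ℝ}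
    (ha : ∀ i, a i ≤ 1) : V * diagonal a * Vᵀ ≤ 1 := by
  have h : 1 - V * diagonal a * Vᵀ = V * diagonal (fun i => 1 - a i) * Vᵀ := by
    rw [← diagonal_sub, Matrix.mul_sub, Matrix.sub_mul, diagonal_one, Matrix.mul_one, hV]
  rw [le_iff, h]
  exact (PosSemidef.diagonal fun i => sub_nonneg.mpr (ha i)).mul_mul_transpose_same V

end ConjDiagonal

lemma PosSemidef.trace_mul_self_le_sq_trace [DecidableEq n] {R : Matrix n n ℝ}
    (hR : R.PosSemidef) : (R * R).trace ≤ R.trace ^ 2 := by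
  obtain ⟨V, hVtV, -, hR'⟩ := hR.1.exists_orthogonal_diagonalization
  rw [hR', conj_diagonal_mul_conj_diagonal_of_orthogonal hVtV,
    trace_conj_diagonal_of_orthogonal hVtV, trace_conj_diagonal_of_orthogonal hVtV]
  simpa [sq] using Finset.sum_sq_le_sq_sum_of_nonneg fun i _ => hR.eigenvalues_nonneg i

lemma abs_le_conj_apply_of_neg_le_of_le [DecidableEq n] {V Δ S : Matrix n n ℝ} {μ : n → ℝ}
    (hΔ : Vᵀ * Δ * V = diagonal μ) (h₁ : -S ≤ Δ) (h₂ : Δ ≤ S) (i : n) :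
    |μ i| ≤ (Vᵀ * S * V) i i := by
  have hlo := ((le_iff.mp h₁).mul_mul_transpose_same Vᵀ).diag_nonneg (i := i)
  have hhi := ((le_iff.mp h₂).mul_mul_transpose_same Vᵀ).diag_nonneg (i := i)
  simp only [transpose_transpose, Matrix.mul_sub, Matrix.sub_mul, Matrix.mul_neg, Matrix.neg_mul,
    hΔ, sub_apply, neg_apply, diagonal_apply_eq] at hlo hhi
  exact abs_le.mpr ⟨by linarith, by linarith⟩

lemma trace_mul_add_mul_eq_two_mul {T Δ S J : Matrix n n ℝ} (hTΔ : T * Δ = J)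
    (hΔT : Δ * T = J) : (T * (Δ * S + S * Δ)).trace = 2 * (J * S).trace := by
  rw [Matrix.mul_add, trace_add, ← Matrix.mul_assoc, hTΔ, ← Matrix.mul_assoc, trace_mul_cycle, hΔT,
    two_mul]

lemma exists_orthogonal_transpose_mul_self_eq_diagonal [DecidableEq n] (W : Matrix m n ℝ) :
    ∃ (V : Matrix n n ℝ) (d : n → ℝ), Vᵀ * V = 1 ∧ V * Vᵀ = 1 ∧ (∀ i, 0 ≤ d i) ∧
      (W * V)ᵀ * (W * V) = diagonal d := by
  have hWW := posSemidef_transpose_mul_self W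
  obtain ⟨V, hVtV, hVVt, hdiag⟩ := hWW.1.exists_orthogonal_diagonalization
  refine ⟨V, _, hVtV, hVVt, hWW.eigenvalues_nonneg, ?_⟩
  set d := hWW.1.eigenvalues
  rw [transpose_mul, Matrix.mul_assoc, ← Matrix.mul_assoc Wᵀ, hdiag]
  simp only [Matrix.mul_assoc, hVtV, Matrix.mul_one]
  rw [← Matrix.mul_assoc, hVtV, Matrix.one_mul]

theorem exists_polar_decomposition [DecidableEq m] [DecidableEq n] (W : Matrix m n ℝ) :
    ∃ Y : Matrix m n ℝ,
      Y * Yᵀ ≤ 1 ∧ W * Yᵀ = CFC.sqrt (W * Wᵀ) ∧ CFC.sqrt (W * Wᵀ) * Y = W := by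
  obtain ⟨V, d, hVtV, hVVt, hd, hN⟩ := exists_orthogonal_transpose_mul_self_eq_diagonal W
  set N := W * V
  have hNV : N * Vᵀ = W := by rw [Matrix.mul_assoc, hVVt, Matrix.mul_one]
  have hNN : N * Nᵀ = W * Wᵀ := by
    rw [transpose_mul, Matrix.mul_assoc, ← Matrix.mul_assoc V, hVVt, Matrix.one_mul]
  -- `g` inverts `√d` off its zeros (where `(√0)⁻¹ = 0`), so `g * d * g` is the indicator of `d ≠ 0`
  set g : n → ℝ := fun i => (√(d i))⁻¹
  have hg : ∀ i, 0 ≤ g i := fun i => inv_nonneg.mpr (Real.sqrt_nonneg _)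
  have hNg : N * diagonal (g * d * g) = N := by
    refine mul_diagonal_eq_self_of_transpose_mul_self_eq_diagonal hN fun i hi => ?_
    have hsqrt : √(d i) ≠ 0 := by rwa [Real.sqrt_ne_zero (hd i)]
    simp only [Pi.mul_apply, g]
    field_simp
    exact (Real.sq_sqrt (hd i)).symm
  have hR : CFC.sqrt (W * Wᵀ) = N * diagonal g * Nᵀ := by
    refine CFC.sqrt_unique ?_ ?_
    · rw [conj_diagonal_mul_conj_diagonal hN, hNg, hNN]
    · exact nonneg_iff_posSemidef.mpr ((PosSemidef.diagonal hg).mul_mul_transpose_same N)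
  have hYt : (N * diagonal g * Vᵀ)ᵀ = V * diagonal g * Nᵀ := by
    rw [transpose_mul, transpose_mul, diagonal_transpose, transpose_transpose, Matrix.mul_assoc]
  refine ⟨N * diagonal g * Vᵀ, ?_, ?_, ?_⟩
  · have hYY : N * diagonal g * Vᵀ * (V * diagonal g * Nᵀ) = N * diagonal (g * g) * Nᵀ := by
      simp only [Matrix.mul_assoc]
      rw [← Matrix.mul_assoc Vᵀ V, hVtV, Matrix.one_mul, ← Matrix.mul_assoc (diagonal g),
        diagonal_mul_diagonal]
      rfl
    have hsplit : diagonal (g * g * d * (g * g)) = diagonal (g * d * g) * diagonal (g * g) := by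
      rw [diagonal_mul_diagonal]; congr 1; ext i; simp only [Pi.mul_apply]; ring
    rw [hYt, hYY]
    refine le_one_of_transpose_eq_of_mul_self_eq (transpose_conj_diagonal _ _) ?_
    rw [conj_diagonal_mul_conj_diagonal hN, hsplit, ← Matrix.mul_assoc N, hNg]
  · rw [hR, hYt, ← hNV]
    simp only [Matrix.mul_assoc]
    rw [← Matrix.mul_assoc Vᵀ V, hVtV, Matrix.one_mul]
  · rw [hR]
    calc N * diagonal g * Nᵀ * (N * diagonal g * Vᵀ)
        = N * (diagonal g * (Nᵀ * N) * diagonal g) * Vᵀ := by simp only [Matrix.mul_assoc]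
      _ = N * diagonal (g * d * g) * Vᵀ := by
          rw [hN, diagonal_mul_diagonal, diagonal_mul_diagonal]; rfl
      _ = W := by rw [hNg, hNV]

end Matrix

section

variable {l m n : ℕ}

lemma frobSq_eq_trace_mul_transpose (A : Matrix (Fin m) (Fin n) ℝ) :
    frobSq A = (A * Aᵀ).trace := by
  simp [frobSq, trace, mul_apply, pow_two]

lemma frobSq_transpose (A : Matrix (Fin m) (Fin n) ℝ) : frobSq Aᵀ = frobSq A := by
  rw [frobSq_eq_trace_mul_transpose, frobSq_eq_trace_mul_transpose, transpose_transpose,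
    trace_mul_comm]

lemma frobSq_nonneg (A : Matrix (Fin m) (Fin n) ℝ) : 0 ≤ frobSq A := by
  unfold frobSq; positivity

lemma frobNorm_mul_self (A : Matrix (Fin m) (Fin n) ℝ) : frobNorm A * frobNorm A = frobSq A :=
  Real.mul_self_sqrt (frobSq_nonneg A)

lemma trace_transpose_mul_le_frobNorm_mul_frobNorm (X Y : Matrix (Fin m) (Fin n) ℝ) :
    (Xᵀ * Y).trace ≤ frobNorm X * frobNorm Y := by
  have h := Real.sum_mul_le_sqrt_mul_sqrt Finset.univ (fun p : Fin m × Fin n => X p.1 p.2)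
    fun p => Y p.1 p.2
  simp only [Fintype.sum_prod_type] at h
  simpa [trace, mul_apply, frobNorm, frobSq, Finset.sum_comm (γ := Fin m)] using h

lemma frobSq_mul_le_of_mul_transpose_le_one (X : Matrix (Fin l) (Fin m) ℝ)
    {U : Matrix (Fin m) (Fin n) ℝ} (hU : U * Uᵀ ≤ 1) : frobSq (X * U) ≤ frobSq X := by
  have h := ((le_iff.mp hU).mul_mul_transpose_same X).trace_nonneg
  rw [Matrix.mul_sub, Matrix.sub_mul, trace_sub, Matrix.mul_one] at h
  rw [frobSq_eq_trace_mul_transpose, frobSq_eq_trace_mul_transpose, transpose_mul,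
    ← Matrix.mul_assoc, Matrix.mul_assoc X]
  linarith

lemma frobNorm_mul_le_of_mul_transpose_le_one (X : Matrix (Fin l) (Fin m) ℝ)
    {U : Matrix (Fin m) (Fin n) ℝ} (hU : U * Uᵀ ≤ 1) : frobNorm (X * U) ≤ frobNorm X :=
  Real.sqrt_le_sqrt (frobSq_mul_le_of_mul_transpose_le_one X hU)

lemma nuclearNorm_eq_trace_sqrt (W : Matrix (Fin m) (Fin n) ℝ) :
    nuclearNorm W = (CFC.sqrt (W * Wᵀ)).trace := by
  have hW := wwT_posSemidef W
  rw [CFC.sqrt_eq_cfc, cfc_nnreal_eq_real _ _ (nonneg_iff_posSemidef.mpr hW), hW.1.cfc_eq]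
  simp only [nuclearNorm, IsHermitian.cfc, Unitary.conjStarAlgAut_apply]
  congr 4
  funext i
  simp [Real.coe_toNNReal', hW.eigenvalues_nonneg i]

lemma nuclearNorm_eq_trace_of_mul_self_eq {W : Matrix (Fin m) (Fin n) ℝ}
    {R : Matrix (Fin m) (Fin m) ℝ} (hR : R.PosSemidef) (h : R * R = W * Wᵀ) :
    nuclearNorm W = R.trace := by
  rw [nuclearNorm_eq_trace_sqrt, CFC.sqrt_unique h (nonneg_iff_posSemidef.mpr hR)]

lemma nuclearNorm_nonneg (W : Matrix (Fin m) (Fin n) ℝ) : 0 ≤ nuclearNorm W := by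
  rw [nuclearNorm_eq_trace_sqrt]
  exact (posSemidef_sqrt _).trace_nonneg

lemma nuclearNorm_neg (W : Matrix (Fin m) (Fin n) ℝ) : nuclearNorm (-W) = nuclearNorm W := by
  simp only [nuclearNorm_eq_trace_sqrt, transpose_neg, Matrix.neg_mul, Matrix.mul_neg, neg_neg]

lemma trace_transpose_mul_le_nuclearNorm (W : Matrix (Fin m) (Fin n) ℝ)
    {U : Matrix (Fin m) (Fin n) ℝ} (hU : U * Uᵀ ≤ 1) : (Uᵀ * W).trace ≤ nuclearNorm W := by
  obtain ⟨Y, hY, -, hRY⟩ := exists_polar_decomposition W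
  set R := CFC.sqrt (W * Wᵀ)
  set S := CFC.sqrt R
  have hS : S.PosSemidef := posSemidef_sqrt R
  have hSS : S * S = R := CFC.sqrt_mul_sqrt_self R (CFC.sqrt_nonneg _)
  calc (Uᵀ * W).trace = ((S * U)ᵀ * (S * Y)).trace := by
        rw [← hRY, ← hSS, transpose_mul, hS.1.transpose_eq]
        simp only [Matrix.mul_assoc]
    _ ≤ frobNorm (S * U) * frobNorm (S * Y) := trace_transpose_mul_le_frobNorm_mul_frobNorm _ _
    _ ≤ frobNorm S * frobNorm S :=
        mul_le_mul (frobNorm_mul_le_of_mul_transpose_le_one S hU)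
          (frobNorm_mul_le_of_mul_transpose_le_one S hY) (Real.sqrt_nonneg _) (Real.sqrt_nonneg _)
    _ = nuclearNorm W := by
        rw [frobNorm_mul_self, frobSq_eq_trace_mul_transpose, hS.1.transpose_eq, hSS,
          nuclearNorm_eq_trace_sqrt]

lemma exists_trace_transpose_mul_eq_nuclearNorm (W : Matrix (Fin m) (Fin n) ℝ) :
    ∃ U : Matrix (Fin m) (Fin n) ℝ, U * Uᵀ ≤ 1 ∧ (Uᵀ * W).trace = nuclearNorm W := by
  obtain ⟨Y, hY, hWY, -⟩ := exists_polar_decomposition W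
  exact ⟨Y, hY, by rw [trace_mul_comm, hWY, nuclearNorm_eq_trace_sqrt]⟩

lemma nuclearNorm_add_le (W₁ W₂ : Matrix (Fin m) (Fin n) ℝ) :
    nuclearNorm (W₁ + W₂) ≤ nuclearNorm W₁ + nuclearNorm W₂ := by
  obtain ⟨U, hU, hUW⟩ := exists_trace_transpose_mul_eq_nuclearNorm (W₁ + W₂)
  rw [← hUW, Matrix.mul_add, trace_add]
  exact add_le_add (trace_transpose_mul_le_nuclearNorm W₁ hU)
    (trace_transpose_mul_le_nuclearNorm W₂ hU)

lemma abs_nuclearNorm_sub_nuclearNorm_le (W₁ W₂ : Matrix (Fin m) (Fin n) ℝ) :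
    |nuclearNorm W₁ - nuclearNorm W₂| ≤ nuclearNorm (W₁ - W₂) := by
  have h₁ := nuclearNorm_add_le W₂ (W₁ - W₂)
  have h₂ := nuclearNorm_add_le W₁ (W₂ - W₁)
  rw [add_sub_cancel] at h₁ h₂
  rw [← neg_sub, nuclearNorm_neg] at h₂
  exact abs_sub_le_iff.mpr ⟨by linarith, by linarith⟩

lemma frobNorm_transpose (A : Matrix (Fin m) (Fin n) ℝ) : frobNorm Aᵀ = frobNorm A := by
  rw [frobNorm, frobNorm, frobSq_transpose]

lemma nuclearNorm_mul_le_frobNorm_mul_frobNorm (X : Matrix (Fin m) (Fin l) ℝ)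
    (Y : Matrix (Fin l) (Fin n) ℝ) : nuclearNorm (X * Y) ≤ frobNorm X * frobNorm Y := by
  obtain ⟨U, hU, hUXY⟩ := exists_trace_transpose_mul_eq_nuclearNorm (X * Y)
  calc nuclearNorm (X * Y) = ((Xᵀ * U)ᵀ * Y).trace := by
        rw [← hUXY, transpose_mul, transpose_transpose, Matrix.mul_assoc]
    _ ≤ frobNorm (Xᵀ * U) * frobNorm Y := trace_transpose_mul_le_frobNorm_mul_frobNorm _ _
    _ ≤ frobNorm X * frobNorm Y := by
        rw [← frobNorm_transpose X]
        exact mul_le_mul_of_nonneg_right (frobNorm_mul_le_of_mul_transpose_le_one _ hU)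
          (Real.sqrt_nonneg _)

lemma frobNorm_le_nuclearNorm (A : Matrix (Fin m) (Fin n) ℝ) : frobNorm A ≤ nuclearNorm A := by
  set R := CFC.sqrt (A * Aᵀ)
  have hR : R.PosSemidef := posSemidef_sqrt _
  have hRR : R * R = A * Aᵀ :=
    CFC.sqrt_mul_sqrt_self _ (nonneg_iff_posSemidef.mpr (wwT_posSemidef A))
  rw [frobNorm, frobSq_eq_trace_mul_transpose, ← hRR, nuclearNorm_eq_trace_sqrt,
    ← Real.sqrt_sq hR.trace_nonneg]
  exact Real.sqrt_le_sqrt hR.trace_mul_self_le_sq_trace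

end

/-- Powers–Størmer. With `Δ = C - P` and `T = sign Δ` one has
`tr (T (C² - P²)) = tr (|Δ| (C + P))`, and in an eigenbasis of `Δ` the diagonal of `C + P`
dominates `|Δ|` because `C + P ± Δ ≥ 0`. -/
theorem frobSq_sub_le_nuclearNorm_mul_self_sub {r : ℕ} {C P : Matrix (Fin r) (Fin r) ℝ}
    (hC : C.PosSemidef) (hP : P.PosSemidef) : frobSq (C - P) ≤ nuclearNorm (C * C - P * P) := by
  set Δ := C - P
  set S := C + P
  have hΔ : Δ.IsHermitian := hC.1.sub hP.1
  obtain ⟨V, hVtV, hVVt, hΔV⟩ := hΔ.exists_orthogonal_diagonalization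
  set μ := hΔ.eigenvalues
  have hVΔV : Vᵀ * Δ * V = diagonal μ := by
    rw [hΔV]
    simp only [Matrix.mul_assoc, hVtV, Matrix.mul_one]
    rw [← Matrix.mul_assoc, hVtV, Matrix.one_mul]
  have hbound : ∀ i, |μ i| ≤ (Vᵀ * S * V) i i := by
    refine abs_le_conj_apply_of_neg_le_of_le hVΔV ?_ ?_
    · have h : Δ - -S = C + C := by simp only [Δ, S]; abel
      rw [le_iff, h]; exact hC.add hC
    · have h : S - Δ = P + P := by simp only [Δ, S]; abel
      rw [le_iff, h]; exact hP.add hP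
  set T := V * diagonal (fun i => (SignType.sign (μ i) : ℝ)) * Vᵀ
  have hT : T * Tᵀ ≤ 1 := by
    rw [transpose_conj_diagonal, conj_diagonal_mul_conj_diagonal_of_orthogonal hVtV]
    refine conj_diagonal_le_one_of_orthogonal hVVt fun i => ?_
    rcases lt_trichotomy (μ i) 0 with h | h | h <;> simp [h]
  have hTΔ : T * Δ = V * diagonal (fun i => |μ i|) * Vᵀ := by
    rw [hΔV, conj_diagonal_mul_conj_diagonal_of_orthogonal hVtV]
    congr; ext i; exact sign_mul_self (μ i)
  have hΔT : Δ * T = V * diagonal (fun i => |μ i|) * Vᵀ := by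
    rw [hΔV, conj_diagonal_mul_conj_diagonal_of_orthogonal hVtV]
    congr; ext i; exact self_mul_sign (μ i)
  have hkey : 2 * (T * (C * C - P * P)).trace = 2 * ∑ i, |μ i| * (Vᵀ * S * V) i i := by
    have hsum : Δ * S + S * Δ = (2 : ℝ) • (C * C - P * P) := by
      simp only [Δ, S, Matrix.sub_mul, Matrix.add_mul, Matrix.mul_add, Matrix.mul_sub, two_smul]
      abel
    rw [← trace_conj_diagonal_mul, ← trace_mul_add_mul_eq_two_mul hTΔ hΔT, hsum, Matrix.mul_smul,
      trace_smul, smul_eq_mul]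
  calc frobSq Δ = ∑ i, μ i * μ i := by
        rw [frobSq_eq_trace_mul_transpose, hΔ.transpose_eq, hΔV,
          conj_diagonal_mul_conj_diagonal_of_orthogonal hVtV,
          trace_conj_diagonal_of_orthogonal hVtV]
        rfl
    _ ≤ ∑ i, |μ i| * (Vᵀ * S * V) i i := Finset.sum_le_sum fun i _ => by
        rw [← abs_mul_abs_self]; exact mul_le_mul_of_nonneg_left (hbound i) (abs_nonneg _)
    _ = (Tᵀ * (C * C - P * P)).trace := by rw [transpose_conj_diagonal]; linarith
    _ ≤ nuclearNorm (C * C - P * P) := trace_transpose_mul_le_nuclearNorm _ hT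

/-- `| ‖ABᵀ‖_* − ‖A‖_F² | ≤ √(‖AᵀA − BᵀB‖_*) · ‖A‖_*`. -/
theorem nuclearNorm_gap_bound {m n r : ℕ}
    (A : Matrix (Fin m) (Fin r) ℝ) (B : Matrix (Fin n) (Fin r) ℝ) :
    |nuclearNorm (A * Bᵀ) - frobSq A| ≤
      Real.sqrt (nuclearNorm (Aᵀ * A - Bᵀ * B)) * nuclearNorm A := by
  set P := CFC.sqrt (Aᵀ * A)
  set C := CFC.sqrt (Bᵀ * B)
  have hP : P.PosSemidef := posSemidef_sqrt _
  have hC : C.PosSemidef := posSemidef_sqrt _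
  have hPP : P * P = Aᵀ * A :=
    CFC.sqrt_mul_sqrt_self _ (nonneg_iff_posSemidef.mpr (posSemidef_transpose_mul_self A))
  have hCC : C * C = Bᵀ * B :=
    CFC.sqrt_mul_sqrt_self _ (nonneg_iff_posSemidef.mpr (posSemidef_transpose_mul_self B))
  have hAB : nuclearNorm (A * Bᵀ) = nuclearNorm (A * C) := by
    have h : A * Bᵀ * (A * Bᵀ)ᵀ = A * C * (A * C)ᵀ := by
      simp only [transpose_mul, transpose_transpose, hC.1.transpose_eq, Matrix.mul_assoc]
      rw [← Matrix.mul_assoc C, hCC, Matrix.mul_assoc]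
    rw [nuclearNorm_eq_trace_sqrt, nuclearNorm_eq_trace_sqrt, h]
  have hAA : frobSq A = nuclearNorm (A * P) := by
    refine (frobSq_eq_trace_mul_transpose A).trans
      (nuclearNorm_eq_trace_of_mul_self_eq (wwT_posSemidef A) ?_).symm
    simp only [transpose_mul, hP.1.transpose_eq, Matrix.mul_assoc]
    rw [← Matrix.mul_assoc P, hPP, Matrix.mul_assoc]
  have hPS : frobSq (P - C) ≤ nuclearNorm (Aᵀ * A - Bᵀ * B) := by
    simpa only [hPP, hCC] using frobSq_sub_le_nuclearNorm_mul_self_sub hP hC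
  rw [hAB, hAA, abs_sub_comm, mul_comm]
  calc |nuclearNorm (A * P) - nuclearNorm (A * C)| ≤ nuclearNorm (A * (P - C)) := by
        rw [Matrix.mul_sub]; exact abs_nuclearNorm_sub_nuclearNorm_le _ _
    _ ≤ frobNorm A * frobNorm (P - C) := nuclearNorm_mul_le_frobNorm_mul_frobNorm _ _
    _ ≤ nuclearNorm A * √(nuclearNorm (Aᵀ * A - Bᵀ * B)) :=
        mul_le_mul (frobNorm_le_nuclearNorm A) (Real.sqrt_le_sqrt hPS) (Real.sqrt_nonneg _)
          (nuclearNorm_nonneg A)
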